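/- arXiv:2504.00633 — 8 statements merged into one kernel-verified Lean document; each statement's English description precedes it below -/
import Mathlib

section
/- If S is a subterminal scheme and U is an affine open subset of S, then the ring of sections Γ(S, U) of the structure sheaf of S over U is a solid ring. -/
/-!
An open immersion is a monomorphism, so the affine open `Spec Γ(S, U) ⟶ S` makes `Spec Γ(S, U)`
subterminal; since `Spec` is faithful, any two ring maps out of `R := Γ(S, U)` then agree. Applied
to the two inclusions `R ⟶ R ⊗[ℤ] R` this says that `ℤ → R` is an epimorphism of rings, i.e.
`r ⊗ 1 = 1 ⊗ r`, and that identity forces any two ring maps `f, g : R → A` to agree, as both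
factor through `f ⊗ g : R ⊗[ℤ] R → A`. The detour through the tensor product lets `A` live in any
universe.
-/

open AlgebraicGeometry CategoryTheory
open scoped TensorProduct

theorem CategoryTheory.IsSubterminal.of_mono {C : Type*} [Category C] {X Y : C} (f : X ⟶ Y)
    [Mono f] (hY : IsSubterminal Y) : IsSubterminal X :=
  fun _ _ _ => (cancel_mono f).mp (hY _ _)

namespace Algebra.IsEpi

instance subsingleton_algHom {R A B : Type*} [CommSemiring R] [CommSemiring A] [Algebra R A]
    [Algebra.IsEpi R A] [CommSemiring B] [Algebra R B] : Subsingleton (A →ₐ[R] B) := by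
  refine ⟨fun f g => AlgHom.ext fun a => ?_⟩
  let φ := Algebra.TensorProduct.lift f g fun _ _ => .all _ _
  calc f a = φ (a ⊗ₜ 1) := by simp [φ]
    _ = φ (1 ⊗ₜ a) := by rw [(isEpi_iff_forall_one_tmul_eq R A).mp ‹_› a]
    _ = g a := by simp [φ]

theorem subsingleton_ringHom {A B : Type*} [CommRing A] [Algebra.IsEpi ℤ A] [CommRing B] :
    Subsingleton (A →+* B) :=
  RingHom.toIntAlgHom_injective.subsingleton

end Algebra.IsEpi

theorem Algebra.isEpi_int_of_forall_hom_eq {R : CommRingCat}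
    (h : ∀ (B : CommRingCat) (f g : R ⟶ B), f = g) : Algebra.IsEpi ℤ R := by
  refine (isEpi_iff_forall_one_tmul_eq ℤ R).mpr fun r => ?_
  have := h (.of (R ⊗[ℤ] R))
    (CommRingCat.ofHom (Algebra.TensorProduct.includeRight (R := ℤ)).toRingHom)
    (CommRingCat.ofHom Algebra.TensorProduct.includeLeftRingHom)
  exact congr($this r)

theorem AlgebraicGeometry.Spec.hom_eq_of_isSubterminal {R B : CommRingCat}
    (h : IsSubterminal (Spec R)) (f g : R ⟶ B) : f = g :=
  Spec.map_injective (h _ _)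

/-- If `S` is a subterminal scheme and `U` is an affine open subset of `S`, then the ring
of sections of the structure sheaf of `S` over `U` is a solid ring: for every commutative
ring `A` there is at most one ring homomorphism from it to `A`. -/
theorem sections_isSolid_of_isSubterminal (S : Scheme) (hS : IsSubterminal S)
    (U : S.Opens) (hU : IsAffineOpen U) :
    ∀ A : CommRingCat, Subsingleton ((S.presheaf.obj (Opposite.op U) : CommRingCat) →+* A) := by
  intro A
  have hSpec : IsSubterminal (Spec Γ(S, U)) := hS.of_mono hU.fromSpec
  have : Algebra.IsEpi ℤ Γ(S, U) :=
    Algebra.isEpi_int_of_forall_hom_eq fun _ => Spec.hom_eq_of_isSubterminal hSpec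
  exact Algebra.IsEpi.subsingleton_ringHom
end

section
/- Let n ≥ 2 be an integer and let J be a set of prime numbers containing every prime factor of n. Then the product ring ℤ[J⁻¹] × ℤ/nℤ is a solid ring; that is, for every commutative ring A there is at most one ring homomorphism ℤ[J⁻¹] × ℤ/nℤ → A. -/
/-!
Ring maps out of `R × S` are pinned down by the image of the idempotent `(1, 0)` together with
the two induced maps `R → A ⧸ (1 - g (1, 0))` and `S → A ⧸ g (1, 0)`. When `R` and `S` are solid,
only the idempotent remains, and it is forced as soon as some integer `m` is a unit in `R` and zero
in `S`: then `a = g (1, 0)` and `b = h (1, 0)` satisfy `a (1 - b) = 0 = b (1 - a)`, so `a = ab = b`.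
Here `R = ℤ[J⁻¹]`, `S = ℤ/nℤ` and `m = n`.
-/

universe u v w

/-- Solidity tested against the commutative rings of universe `v`. -/
def IsSolidRing (R : Type u) [CommRing R] : Prop :=
  ∀ (A : Type v) [CommRing A], Subsingleton (R →+* A)

theorem isSolidRing_int : IsSolidRing.{0, v} ℤ :=
  fun _ _ => inferInstance

theorem isSolidRing_zmod (n : ℕ) : IsSolidRing.{0, v} (ZMod n) :=
  fun _ _ => inferInstance

theorem IsSolidRing.of_isLocalization {R L : Type*} [CommRing R] [CommRing L] [Algebra R L]
    (M : Submonoid R) [IsLocalization M L] (hR : IsSolidRing.{_, v} R) : IsSolidRing.{_, v} L :=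
  fun A _ => ⟨fun _ _ => IsLocalization.ringHom_ext M ((hR A).elim _ _)⟩

theorem natCast_mem_closure_natCast_image {R : Type*} [CommSemiring R] {n : ℕ} (hn : n ≠ 0)
    {J : Set ℕ} (hJ : ∀ p : ℕ, p.Prime → p ∣ n → p ∈ J) :
    (n : R) ∈ Submonoid.closure ((Nat.cast : ℕ → R) '' J) := by
  rw [← Nat.prod_primeFactorsList hn, Nat.cast_list_prod]
  refine Submonoid.list_prod_mem _ fun x hx => ?_
  obtain ⟨p, hp, rfl⟩ := List.mem_map.mp hx
  exact Submonoid.subset_closure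
    ⟨p, hJ p (Nat.prime_of_mem_primeFactorsList hp) (Nat.dvd_of_mem_primeFactorsList hp), rfl⟩

section Prod

variable {R S : Type*} {A : Type w} [CommRing R] [CommRing S] [CommRing A]

theorem RingHom.map_eq_of_natCast_mul_eq {B : Type*} [CommRing B] (g h : B →+* A) {m : ℕ}
    {e u : B} (hu : (m : B) * u = e) (he : (m : B) * (1 - e) = 0) : g e = h e := by
  have key (g h : B →+* A) : g e * (1 - h e) = 0 := by
    calc g e * (1 - h e) = g u * h ((m : B) * (1 - e)) := by
          simp only [← hu, map_mul, map_sub, map_one, map_natCast]; ring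
      _ = 0 := by rw [he, map_zero, mul_zero]
  linear_combination key g h - key h g

theorem RingHom.map_one_zero_eq_of_natCast {m : ℕ} (hmR : IsUnit (m : R)) (hmS : (m : S) = 0)
    (g h : R × S →+* A) : g (1, 0) = h (1, 0) := by
  obtain ⟨v, hv⟩ := hmR.exists_right_inv
  refine g.map_eq_of_natCast_mul_eq h (m := m) (u := (v, 0)) ?_ ?_ <;> ext <;> simp [hv, hmS]

def RingHom.fstModulo (g : R × S →+* A) (I : Ideal A) (hI : 1 - g (1, 0) ∈ I) :
    R →+* A ⧸ I where
  toFun x := Ideal.Quotient.mk I (g (x, 0))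
  map_one' := by
    rw [← map_one (Ideal.Quotient.mk I), Ideal.Quotient.eq, ← neg_sub]
    exact I.neg_mem hI
  map_mul' x y := by rw [← map_mul, ← map_mul, Prod.mk_mul_mk, mul_zero]
  map_zero' := by rw [Prod.mk_zero_zero, map_zero, map_zero]
  map_add' x y := by rw [← map_add, ← map_add, Prod.mk_add_mk, add_zero]

theorem RingHom.map_fst_zero_eq (hR : IsSolidRing.{_, w} R) {g h : R × S →+* A}
    (he : g (1, 0) = h (1, 0)) (x : R) : g (x, 0) = h (x, 0) := by
  set a := g (1, 0)
  have hfst : ∀ f : R × S →+* A, f (x, 0) = f (1, 0) * f (x, 0) := fun f => by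
    rw [← map_mul, Prod.mk_mul_mk, one_mul, zero_mul]
  have hidem : a * (1 - a) = 0 := by
    rw [mul_sub, mul_one, ← map_mul, Prod.mk_mul_mk, one_mul, mul_zero, sub_self]
  let I := Ideal.span {1 - a}
  have hmod := congrArg (· x) <| (hR (A ⧸ I)).elim
    (g.fstModulo I (Ideal.mem_span_singleton_self _))
    (h.fstModulo I (he ▸ Ideal.mem_span_singleton_self _))
  obtain ⟨c, hc⟩ := Ideal.mem_span_singleton'.mp (Ideal.Quotient.eq.mp hmod)
  -- `g (x, 0) - h (x, 0)` lies in both `a A` and `(1 - a) A`, which meet in `0`.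
  calc g (x, 0) = a * (g (x, 0) - h (x, 0)) + h (x, 0) := by
        rw [mul_sub, ← hfst, he, ← hfst]; ring
    _ = c * (a * (1 - a)) + h (x, 0) := by rw [← hc]; ring
    _ = h (x, 0) := by rw [hidem, mul_zero, zero_add]

theorem IsSolidRing.prod (hR : IsSolidRing.{_, w} R) (hS : IsSolidRing.{_, w} S) {m : ℕ}
    (hmR : IsUnit (m : R)) (hmS : (m : S) = 0) : IsSolidRing.{_, w} (R × S) := by
  intro A _
  refine ⟨fun g h => ?_⟩
  have he := RingHom.map_one_zero_eq_of_natCast hmR hmS g h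
  have he' : g (0, 1) = h (0, 1) := by
    rw [show ((0, 1) : R × S) = 1 - (1, 0) by ext <;> simp, map_sub, map_sub, map_one, map_one, he]
  have hfst := RingHom.map_fst_zero_eq hR he
  have hsnd (y : S) : g (0, y) = h (0, y) := by
    simpa using RingHom.map_fst_zero_eq (g := g.comp RingEquiv.prodComm.toRingHom)
      (h := h.comp RingEquiv.prodComm.toRingHom) hS (by simpa using he') y
  ext ⟨x, y⟩
  rw [show ((x, y) : R × S) = (x, 0) + (0, y) by simp, map_add, map_add, hfst, hsnd]

end Prod

theorem localization_prod_zmod_isSolid_general (n : ℕ) (hn : 2 ≤ n)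
    (J : Set ℕ)
    (hfac : ∀ p : ℕ, p.Prime → p ∣ n → p ∈ J) :
    ∀ (A : Type*) [CommRing A],
      Subsingleton
        ((Localization (Submonoid.closure ((fun p : ℕ => (p : ℤ)) '' J)) × ZMod n) →+* A) := by
  set M := Submonoid.closure ((fun p : ℕ => (p : ℤ)) '' J)
  have hnM : (n : ℤ) ∈ M := natCast_mem_closure_natCast_image (by omega) hfac
  have hunit : IsUnit (n : Localization M) := by
    simpa using IsLocalization.map_units (Localization M) (⟨n, hnM⟩ : M)
  exact IsSolidRing.prod (isSolidRing_int.of_isLocalization M) (isSolidRing_zmod n) hunit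
    (ZMod.natCast_self n)

/-- Let `n ≥ 2` be an integer and let `J` be a set of prime numbers containing every prime
factor of `n`. Then the product ring `ℤ[J⁻¹] × ℤ/nℤ` is a solid ring: for every commutative
ring `A` there is at most one ring homomorphism `ℤ[J⁻¹] × ℤ/nℤ →+* A`. -/
theorem localization_prod_zmod_isSolid (n : ℕ) (hn : 2 ≤ n)
    (J : Set ℕ) (hJ : ∀ p ∈ J, Nat.Prime p)
    (hfac : ∀ p : ℕ, p.Prime → p ∣ n → p ∈ J) :
    ∀ (A : Type*) [CommRing A],
      Subsingleton
        ((Localization (Submonoid.closure ((fun p : ℕ => (p : ℤ)) '' J)) × ZMod n) →+* A) :=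
  localization_prod_zmod_isSolid_general n hn J hfac
end

section
/- Let S be a subterminal scheme and let x be a point of S. Then the stalk of the structure sheaf of S at x is isomorphic, as a commutative ring, to one of the following: the field ℚ, the localization ℤ_(p) of ℤ at a prime ideal (p) for some prime p, or the cyclic ring ℤ/pⁿℤ for some prime p and positive integer n. -/
open AlgebraicGeometry CategoryTheory

/-- The ideal `(p) ⊆ ℤ` generated by a prime number `p` is a prime ideal. -/
theorem spanIntPrime (p : ℕ) (hp : p.Prime) : (Ideal.span {(p : ℤ)}).IsPrime :=
  (Ideal.span_singleton_prime (by exact_mod_cast hp.ne_zero)).mpr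
    (Nat.prime_iff_prime_int.mp hp)

/-- `ℤ_(p)`, the localization of `ℤ` at the prime ideal `(p)`. -/
abbrev ZLocAtPrime (p : ℕ) (hp : p.Prime) : Type :=
  @Localization.AtPrime ℤ _ (Ideal.span {(p : ℤ)}) (spanIntPrime p hp)

/-!
Maps out of a stalk of a subterminal scheme are unique, since they come from maps `Spec T ⟶ S`;
so `ℤ → 𝒪_{S,x}` is an epimorphism of rings. Over a field `K` an epimorphic `K`-algebra `A` is `K`
or `0`: applying `f ⊗ id` for a functional `f` with `f 1 = 1` to `1 ⊗ a = a ⊗ 1` gives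
`a = f a • 1`. A local ring `R` that is epimorphic over `ℤ` is therefore `ℚ` if it is a `ℚ`-algebra.
If it has characteristic `pⁿ`, then `R/pR = 𝔽_p`, so `R = ℤ + pR = ℤ + pⁿR = ℤ`. In mixed
characteristic `(0, p)`, `R[1/p]` is a nonzero `ℚ`-algebra, hence `ℚ`, and the resulting map
`R → ℚ` lands in `ℤ_(p)` because a denominator divisible by `p` would lie in the maximal ideal of
`R` together with the numerator. Both `R` and `ℤ_(p)` being epimorphic over `ℤ`, the maps
`R → ℤ_(p) → R` compose to identities.
-/

open TensorProduct Function

namespace Algebra.IsEpi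

theorem surjective_algebraMap_of_field {K A : Type*} [Field K] [Ring A] [Algebra K A]
    [Algebra.IsEpi K A] : Surjective (algebraMap K A) := by
  intro a
  rcases subsingleton_or_nontrivial A with _ | _
  · exact ⟨0, Subsingleton.elim _ _⟩
  obtain ⟨f, hf⟩ := Module.Projective.exists_dual_eq_one K (one_ne_zero : (1 : A) ≠ 0)
  have h := congr_arg (_root_.TensorProduct.lid K A ∘ _root_.TensorProduct.map f LinearMap.id)
    ((isEpi_iff_forall_one_tmul_eq K A).mp ‹_› a)
  simp only [comp_apply, map_tmul, LinearMap.id_coe, id_eq, lid_tmul, hf, one_smul] at h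
  exact ⟨f a, (Algebra.algebraMap_eq_smul_one _).trans h.symm⟩

theorem of_includeRight_eq_includeLeft {R A : Type*} [CommRing R] [CommRing A] [Algebra R A]
    (h : (Algebra.TensorProduct.includeRight : A →ₐ[R] A ⊗[R] A).toRingHom =
      Algebra.TensorProduct.includeLeftRingHom) :
    Algebra.IsEpi R A :=
  (isEpi_iff_forall_one_tmul_eq R A).mpr (RingHom.congr_fun h)

variable {A B : Type*} [CommRing A] [CommRing B] [Algebra.IsEpi ℤ A]

theorem ringHom_ext {T : Type*} [CommRing T] (f g : A →+* T) : f = g := by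
  ext a
  simpa using congr_arg
    (Algebra.TensorProduct.lift g.toIntAlgHom f.toIntAlgHom fun _ _ => .all _ _)
    ((isEpi_iff_forall_one_tmul_eq ℤ A).mp ‹_› a)

theorem of_isEpi_int (R : Type*) [CommRing R] [Algebra R A] : Algebra.IsEpi R A :=
  of_includeRight_eq_includeLeft (ringHom_ext _ _)

theorem of_surjective (f : A →+* B) (hf : Surjective f) : Algebra.IsEpi ℤ B :=
  of_includeRight_eq_includeLeft <| (RingHom.cancel_right hf).mp (ringHom_ext _ _)

theorem of_isLocalization (M : Submonoid A) [Algebra A B] [IsLocalization M B] :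
    Algebra.IsEpi ℤ B :=
  of_includeRight_eq_includeLeft <| IsLocalization.ringHom_ext M (ringHom_ext _ _)

theorem bijective_algebraMap_of_field (K : Type*) [Field K] [Nontrivial A] [Algebra K A] :
    Bijective (algebraMap K A) :=
  have := of_isEpi_int (A := A) K
  ⟨(algebraMap K A).injective, surjective_algebraMap_of_field⟩

end Algebra.IsEpi

section PrimePowerChar

variable {R : Type*} [CommRing R] {p : ℕ}

theorem exists_natCast_add_mul_of_isEpi [Algebra.IsEpi ℤ R] (hp : p.Prime)
    (hpu : ¬IsUnit (p : R)) (r : R) : ∃ (m : ℕ) (s : R), r = m + p * s := by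
  set I := Ideal.span {(p : R)}
  have : Fact p.Prime := ⟨hp⟩
  have : Nontrivial (R ⧸ I) :=
    Ideal.Quotient.nontrivial_iff.mpr (by rwa [Ne, Ideal.span_singleton_eq_top])
  have : CharP (R ⧸ I) p := (CharP.charP_iff_prime_eq_zero hp).mpr <| by
    rw [← map_natCast (Ideal.Quotient.mk I), Ideal.Quotient.eq_zero_iff_mem]
    exact Ideal.mem_span_singleton_self _
  have := Algebra.IsEpi.of_surjective _ (Ideal.Quotient.mk_surjective (I := I))
  let := ZMod.algebra (R ⧸ I) p
  have := Algebra.IsEpi.of_isEpi_int (A := R ⧸ I) (ZMod p)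
  obtain ⟨k, hk⟩ :=
    Algebra.IsEpi.surjective_algebraMap_of_field (K := ZMod p) (Ideal.Quotient.mk I r)
  rw [← ZMod.natCast_zmod_val k, map_natCast, ← map_natCast (Ideal.Quotient.mk I),
    Ideal.Quotient.eq] at hk
  obtain ⟨s, hs⟩ := Ideal.mem_span_singleton'.mp hk
  exact ⟨k.val, -s, by linear_combination hs⟩

theorem natCast_surjective_of_isNilpotent {n : ℕ} (hn : IsNilpotent (n : R))
    (h : ∀ r : R, ∃ (m : ℕ) (s : R), r = m + n * s) : Surjective (Nat.cast : ℕ → R) := by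
  have hpow : ∀ (k : ℕ) (r : R), ∃ (m : ℕ) (s : R), r = m + n ^ k * s := by
    intro k
    induction k with
    | zero => exact fun r => ⟨0, r, by simp⟩
    | succ k ih =>
      intro r
      obtain ⟨m, s, rfl⟩ := ih r
      obtain ⟨m', s', rfl⟩ := h s
      exact ⟨m + n ^ k * m', s', by push_cast; ring⟩
  obtain ⟨k, hk⟩ := hn
  intro r
  obtain ⟨m, s, rfl⟩ := hpow k r
  exact ⟨m, by simp [hk]⟩

theorem nonempty_ringEquiv_zmod_of_isEpi [Nontrivial R] [Algebra.IsEpi ℤ R] {n : ℕ}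
    (hp : p.Prime) [CharP R (p ^ n)] : Nonempty (R ≃+* ZMod (p ^ n)) := by
  have hnil : IsNilpotent (p : R) := ⟨n, by exact_mod_cast CharP.cast_eq_zero R (p ^ n)⟩
  have hsurj := natCast_surjective_of_isNilpotent hnil
    (exists_natCast_add_mul_of_isEpi hp hnil.not_isUnit)
  refine ⟨(RingEquiv.ofBijective (ZMod.castHom dvd_rfl R) ⟨ZMod.castHom_injective R, ?_⟩).symm⟩
  intro r
  obtain ⟨m, rfl⟩ := hsurj r
  exact ⟨m, map_natCast _ m⟩

end PrimePowerChar

section MixedChar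

open IsLocalRing

variable {R : Type*} [CommRing R] [IsLocalRing R]

theorem intCast_mem_maximalIdeal_iff (p : ℕ) [CharP (ResidueField R) p] (z : ℤ) :
    (z : R) ∈ maximalIdeal R ↔ (p : ℤ) ∣ z := by
  rw [← residue_eq_zero_iff, map_intCast, CharP.intCast_eq_zero_iff (ResidueField R) p]

theorem isUnit_intCast_of_not_dvd (p : ℕ) [CharP (ResidueField R) p] {z : ℤ}
    (hz : ¬(p : ℤ) ∣ z) : IsUnit (z : R) :=
  of_not_not fun h => hz ((intCast_mem_maximalIdeal_iff p z).mp h)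

noncomputable def ZLocAtPrime.lift (p : ℕ) (hp : p.Prime) [CharP (ResidueField R) p] :
    ZLocAtPrime p hp →+* R :=
  have := spanIntPrime p hp
  IsLocalization.lift (M := (Ideal.span {(p : ℤ)}).primeCompl) (g := Int.castRingHom R)
    fun y => isUnit_intCast_of_not_dvd p (Ideal.mem_span_singleton.not.mp y.2)

theorem not_dvd_den_ringHom_rat (p : ℕ) (hp : p.Prime) [CharP (ResidueField R) p]
    (θ : R →+* ℚ) (r : R) : ¬(p : ℤ) ∣ (θ r).den := by
  set q := θ r
  intro hden
  have hker : (q.den : R) * r - q.num ∈ maximalIdeal R :=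
    le_maximalIdeal (RingHom.ker_ne_top θ) <| by
      simp [RingHom.mem_ker, q, Rat.den_mul_eq_num]
  have hnum : (p : ℤ) ∣ q.num := by
    rw [← intCast_mem_maximalIdeal_iff (R := R) p]
    have hd : ((q.den : ℤ) : R) ∈ maximalIdeal R := (intCast_mem_maximalIdeal_iff p _).mpr hden
    simpa using sub_mem (Ideal.mul_mem_right r _ hd) hker
  exact hp.ne_one <| Nat.eq_one_of_dvd_coprimes q.reduced (Int.natCast_dvd.mp hnum)
    (Int.natCast_dvd_natCast.mp hden)

theorem nonempty_ringHom_zLocAtPrime (p : ℕ) (hp : p.Prime) [CharP (ResidueField R) p]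
    (θ : R →+* ℚ) : Nonempty (R →+* ZLocAtPrime p hp) := by
  have := spanIntPrime p hp
  set M := (Ideal.span {(p : ℤ)}).primeCompl
  let ι : ZLocAtPrime p hp →+* ℚ := IsLocalization.lift (M := M) (g := Int.castRingHom ℚ)
    fun y => (Int.cast_ne_zero.mpr
      (nonZeroDivisors.ne_zero (Ideal.primeCompl_le_nonZeroDivisors _ y.2))).isUnit
  have hι : Injective ι := (IsLocalization.lift_injective_iff _).mpr fun x y => by
    rw [(IsLocalization.injective (ZLocAtPrime p hp)
      (Ideal.primeCompl_le_nonZeroDivisors (Ideal.span {(p : ℤ)}))).eq_iff]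
    simp
  have hrange : ∀ r, θ r ∈ ι.range := fun r =>
    ⟨IsLocalization.mk' _ (θ r).num
      ⟨(θ r).den, Ideal.mem_span_singleton.not.mpr (not_dvd_den_ringHom_rat p hp θ r)⟩, by
      rw [IsLocalization.lift_mk'_spec]
      simp⟩
  exact ⟨((RingEquiv.ofBijective ι.rangeRestrict
    ⟨fun _ _ h => hι (congr_arg Subtype.val h), ι.rangeRestrict_surjective⟩).symm :
      ι.range →+* ZLocAtPrime p hp).comp (θ.codRestrict ι.range hrange)⟩

theorem nonempty_ringHom_rat_of_isEpi [Algebra.IsEpi ℤ R] (p : ℕ) [CharP (ResidueField R) p]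
    (hnil : ¬IsNilpotent (p : R)) : Nonempty (R →+* ℚ) := by
  let L := Localization.Away (p : R)
  have : Nontrivial L := not_subsingleton_iff_nontrivial.mp fun h =>
    hnil (Submonoid.mem_powers_iff 0 _ |>.mp
      ((IsLocalization.subsingleton_iff (M := Submonoid.powers (p : R))).mp h))
  have := Algebra.IsEpi.of_isLocalization (B := L) (Submonoid.powers (p : R))
  have hunit : ∀ z : nonZeroDivisors ℤ, IsUnit (Int.castRingHom L z) := by
    rintro ⟨z, hz⟩
    obtain ⟨c, hzc, hc⟩ := (Int.finiteMultiplicity_iff (a := p).mpr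
      ⟨by simpa using CharP.char_ne_one (ResidueField R) p, nonZeroDivisors.ne_zero hz⟩
      ).exists_eq_pow_mul_and_not_dvd
    change IsUnit (z : L)
    rw [hzc, Int.cast_mul, Int.cast_pow, Int.cast_natCast]
    simpa using (IsLocalization.Away.algebraMap_pow_isUnit (S := L) (p : R) _).mul
      ((isUnit_intCast_of_not_dvd p hc).map (algebraMap R L))
  let := (IsLocalization.lift hunit : ℚ →+* L).toAlgebra
  exact ⟨(RingEquiv.ofBijective _ (Algebra.IsEpi.bijective_algebraMap_of_field (A := L) ℚ)).symm
    |>.toRingHom.comp (algebraMap R L)⟩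

theorem nonempty_ringEquiv_zLocAtPrime_of_isEpi [Algebra.IsEpi ℤ R] (p : ℕ) (hp : p.Prime)
    [CharP (ResidueField R) p] (hnil : ¬IsNilpotent (p : R)) :
    Nonempty (R ≃+* ZLocAtPrime p hp) := by
  have := spanIntPrime p hp
  obtain ⟨θ⟩ := nonempty_ringHom_rat_of_isEpi p hnil
  obtain ⟨σ⟩ := nonempty_ringHom_zLocAtPrime p hp θ
  exact ⟨RingEquiv.ofRingHom σ (ZLocAtPrime.lift p hp)
    (IsLocalization.ringHom_ext (Ideal.span {(p : ℤ)}).primeCompl (RingHom.ext_int _ _))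
    (Algebra.IsEpi.ringHom_ext _ _)⟩

end MixedChar

theorem MixedCharZero.charP_residueField {R : Type*} [CommRing R] [IsLocalRing R] {p : ℕ}
    (hp : p.Prime) [h : MixedCharZero R p] : CharP (IsLocalRing.ResidueField R) p := by
  obtain ⟨I, hI, _⟩ := h.charP_quotient
  have := Fact.mk hp
  refine (CharP.charP_iff_prime_eq_zero hp).mpr ?_
  rw [← map_natCast (IsLocalRing.residue R), IsLocalRing.residue_eq_zero_iff]
  refine IsLocalRing.le_maximalIdeal hI (Ideal.Quotient.eq_zero_iff_mem.mp ?_)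
  rw [map_natCast, CharP.cast_eq_zero]

theorem IsLocalRing.nonempty_ringEquiv_of_isEpi_int (R : Type*) [CommRing R] [IsLocalRing R]
    [Algebra.IsEpi ℤ R] :
    Nonempty (R ≃+* ℚ) ∨
    (∃ (p : ℕ) (hp : p.Prime), Nonempty (R ≃+* ZLocAtPrime p hp)) ∨
    (∃ (p n : ℕ), p.Prime ∧ 0 < n ∧ Nonempty (R ≃+* ZMod (p ^ n))) := by
  refine split_by_characteristic_localRing R ?_ ?_ ?_
  · rintro _ ⟨p, n, hp, hn, rfl⟩ _
    exact .inr <| .inr ⟨p, n, hp.nat_prime, hn, nonempty_ringEquiv_zmod_of_isEpi hp.nat_prime⟩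
  · intro _
    exact .inl ⟨(RingEquiv.ofBijective _ (Algebra.IsEpi.bijective_algebraMap_of_field ℚ)).symm⟩
  · intro p hp hmixed
    have := hmixed.toCharZero
    have := MixedCharZero.charP_residueField (R := R) hp
    have hnil : ¬IsNilpotent (p : R) := fun ⟨k, hk⟩ =>
      pow_ne_zero k hp.ne_zero (by exact_mod_cast hk)
    exact .inr <| .inl ⟨p, hp, nonempty_ringEquiv_zLocAtPrime_of_isEpi p hp hnil⟩

universe u

namespace AlgebraicGeometry

theorem stalk_ringHom_ext_of_isSubterminal {S : Scheme.{u}} (hS : IsSubterminal S) (x : S)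
    {T : Type u} [CommRing T] (f g : S.presheaf.stalk x →+* T) : f = g := by
  obtain ⟨U, hU, hxU⟩ : ∃ U : S.Opens, IsAffineOpen U ∧ x ∈ U :=
    ⟨_, isAffineOpen_opensRange (S.affineOpenCover.f _), S.affineOpenCover.covers x⟩
  have h1 : Spec.map (CommRingCat.ofHom f) ≫ hU.fromSpecStalk hxU =
      Spec.map (CommRingCat.ofHom g) ≫ hU.fromSpecStalk hxU := hS _ _
  rw [IsAffineOpen.fromSpecStalk, ← Category.assoc, ← Category.assoc,
    ← Spec.map_comp, ← Spec.map_comp, cancel_mono] at h1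
  have h3 : f.comp (S.presheaf.germ U x hxU).hom = g.comp (S.presheaf.germ U x hxU).hom :=
    congrArg CommRingCat.Hom.hom (Spec.map_injective h1)
  let := S.presheaf.algebra_section_stalk (⟨x, hxU⟩ : U)
  have := hU.isLocalization_stalk ⟨x, hxU⟩
  exact IsLocalization.ringHom_ext ((hU.primeIdealOf ⟨x, hxU⟩).asIdeal.primeCompl) h3

theorem isEpi_int_stalk_of_isSubterminal {S : Scheme.{u}} (hS : IsSubterminal S) (x : S) :
    Algebra.IsEpi ℤ (S.presheaf.stalk x) :=
  Algebra.IsEpi.of_includeRight_eq_includeLeft (stalk_ringHom_ext_of_isSubterminal hS x _ _)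

end AlgebraicGeometry

/-- Let `S` be a subterminal scheme and `x` a point of `S`.  Then the stalk of the structure
sheaf of `S` at `x` is isomorphic, as a commutative ring, to `ℚ`, to `ℤ_(p)` for some prime
`p`, or to `ℤ/pⁿℤ` for some prime `p` and positive integer `n`. -/
theorem stalk_of_isSubterminal (S : Scheme) (hS : IsSubterminal S) (x : S) :
    Nonempty ((S.presheaf.stalk x : CommRingCat) ≃+* ℚ) ∨
    (∃ (p : ℕ) (hp : p.Prime),
      Nonempty ((S.presheaf.stalk x : CommRingCat) ≃+* ZLocAtPrime p hp)) ∨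
    (∃ (p n : ℕ), p.Prime ∧ 0 < n ∧
      Nonempty ((S.presheaf.stalk x : CommRingCat) ≃+* ZMod (p ^ n))) := by
  have := isEpi_int_stalk_of_isSubterminal hS x
  exact IsLocalRing.nonempty_ringEquiv_of_isEpi_int _
end

section
/- Let S be a subterminal scheme and let p be a prime number. Then there is at most one point x of S whose stalk is isomorphic, as a commutative ring, to ℤ_(p) or to ℤ/pⁿℤ for some positive integer n. -/
open AlgebraicGeometry CategoryTheory

theorem CategoryTheory.IsSubterminal.eq_of_residueField_ringHom {S : Scheme}
    (hS : IsSubterminal S) {x y : S} (f : S.residueField x →+* S.residueField y) : x = y := by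
  have h := hS (Spec.map (CommRingCat.ofHom f) ≫ S.fromSpecResidueField x)
    (S.fromSpecResidueField y)
  have := congrArg (fun φ : Spec (S.residueField y) ⟶ S => φ default) h
  simp only [Scheme.Hom.comp_apply, Scheme.fromSpecResidueField_apply] at this
  exact (S.fromSpecResidueField_apply x _).symm.trans this

noncomputable def IsLocalRing.residueFieldEquivOfSurjective {A K : Type*} [CommRing A]
    [IsLocalRing A] [Field K] (f : A →+* K) (hf : Function.Surjective f) :
    IsLocalRing.ResidueField A ≃+* K :=
  haveI := IsLocalHom.of_surjective f hf
  RingEquiv.ofBijective (ResidueField.lift f) ⟨(ResidueField.lift f).injective, fun k => by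
    obtain ⟨a, rfl⟩ := hf k
    exact ⟨residue A a, rfl⟩⟩

noncomputable def ZLocAtPrime.toZMod (p : ℕ) (hp : p.Prime) : ZLocAtPrime p hp →+* ZMod p :=
  haveI := Fact.mk hp
  haveI := spanIntPrime p hp
  IsLocalization.lift (M := (Ideal.span {(p : ℤ)}).primeCompl) (g := Int.castRingHom (ZMod p))
    fun s =>
      isUnit_iff_ne_zero.mpr fun h => s.2 <| Ideal.mem_span_singleton.mpr <|
        (ZMod.intCast_zmod_eq_zero_iff_dvd _ p).mp h

theorem nonempty_ringHom_zmod_of_ringEquiv {R : Type*} [CommRing R] (p : ℕ) (hp : p.Prime)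
    (hR : Nonempty (R ≃+* ZLocAtPrime p hp) ∨ ∃ n : ℕ, 0 < n ∧ Nonempty (R ≃+* ZMod (p ^ n))) :
    Nonempty (R →+* ZMod p) := by
  rcases hR with ⟨⟨e⟩⟩ | ⟨n, hn, ⟨e⟩⟩
  · exact ⟨(ZLocAtPrime.toZMod p hp).comp e⟩
  · exact ⟨(ZMod.castHom (dvd_pow_self p hn.ne') (ZMod p)).comp e⟩

/-- Let `S` be a subterminal scheme and `p` a prime number.  Then there is at most one point
`x` of `S` whose stalk is isomorphic to `ℤ_(p)` or to `ℤ/pⁿℤ` for some positive integer `n`. -/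
theorem atMostOne_point_stalk_at_prime (S : Scheme) (hS : IsSubterminal S)
    (p : ℕ) (hp : p.Prime) (x y : S)
    (hx : Nonempty ((S.presheaf.stalk x : CommRingCat) ≃+* ZLocAtPrime p hp) ∨
      ∃ n : ℕ, 0 < n ∧ Nonempty ((S.presheaf.stalk x : CommRingCat) ≃+* ZMod (p ^ n)))
    (hy : Nonempty ((S.presheaf.stalk y : CommRingCat) ≃+* ZLocAtPrime p hp) ∨
      ∃ n : ℕ, 0 < n ∧ Nonempty ((S.presheaf.stalk y : CommRingCat) ≃+* ZMod (p ^ n))) :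
    x = y := by
  have := Fact.mk hp
  obtain ⟨f⟩ := nonempty_ringHom_zmod_of_ringEquiv p hp hx
  obtain ⟨g⟩ := nonempty_ringHom_zmod_of_ringEquiv p hp hy
  let κx := IsLocalRing.residueFieldEquivOfSurjective f (ZMod.ringHom_surjective f)
  let κy := IsLocalRing.residueFieldEquivOfSurjective g (ZMod.ringHom_surjective g)
  exact IsSubterminal.eq_of_residueField_ringHom hS (κy.symm.toRingHom.comp κx.toRingHom)
end

section
/- Let S be a subterminal scheme. Then there is at most one point of S whose stalk is isomorphic, as a commutative ring, to the field ℚ. -/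
/-!
A ring isomorphism `e : 𝒪_{S,x} ≃ 𝒪_{S,y}` gives two morphisms `Spec 𝒪_{S,y} ⟶ S`, namely the
canonical one and `Spec e` followed by the canonical one for `x`; they send the closed point to
`y` and to `x` respectively. On a subterminal scheme the two morphisms coincide, so `x = y`.
-/

open AlgebraicGeometry CategoryTheory IsLocalRing

lemma AlgebraicGeometry.Scheme.SpecMap_fromSpecStalk_closedPoint {X : Scheme} {x : X}
    {R : CommRingCat} [IsLocalRing R] (f : X.presheaf.stalk x ⟶ R) [IsLocalHom f.hom] :
    (Spec.map f ≫ X.fromSpecStalk x) (closedPoint R) = x :=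
  (congrArg (X.fromSpecStalk x) (Spec_closedPoint (f := f))).trans fromSpecStalk_closedPoint

lemma CategoryTheory.IsSubterminal.eq_of_stalk_ringEquiv {S : Scheme} (hS : IsSubterminal S)
    {x y : S} (e : S.presheaf.stalk x ≃+* S.presheaf.stalk y) : x = y := by
  let φ : S.presheaf.stalk x ⟶ S.presheaf.stalk y := CommRingCat.ofHom e.toRingHom
  have : IsLocalHom φ.hom := ⟨(isLocalHom_equiv e).1⟩
  rw [← Scheme.SpecMap_fromSpecStalk_closedPoint φ,
    hS (Spec.map φ ≫ S.fromSpecStalk x) (S.fromSpecStalk y), Scheme.fromSpecStalk_closedPoint]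

/-- Let `S` be a subterminal scheme.  Then there is at most one point of `S` whose stalk is
isomorphic, as a commutative ring, to the field `ℚ`. -/
theorem atMostOne_point_stalk_rat (S : Scheme) (hS : IsSubterminal S) (x y : S)
    (hx : Nonempty ((S.presheaf.stalk x : CommRingCat) ≃+* ℚ))
    (hy : Nonempty ((S.presheaf.stalk y : CommRingCat) ≃+* ℚ)) :
    x = y :=
  hS.eq_of_stalk_ringEquiv (hx.some.trans hy.some.symm)
end

section
/- Let S be a subterminal scheme. If there exists a point of S whose stalk is isomorphic, as a commutative ring, to ℤ_(p) for some prime p, then there exists a point of S whose stalk is isomorphic, as a commutative ring, to ℚ. -/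
/-!
`ℤ_(p)` is a domain whose fraction field is `ℚ`. On any scheme, a point `x` with integral stalk
has a generization `y` whose stalk is the fraction field of `𝒪_{X,x}`: on an affine open
`Spec A ∋ x` with `𝒪_{X,x} = A_𝔭`, take `y` to be the prime `ker (A → A_𝔭)`, at which
`A_y = (A_𝔭)_{(0)} = Frac A_𝔭`.
-/

open AlgebraicGeometry CategoryTheory

section FractionRing

variable {R : Type*} [CommRing R] [IsDomain R] (P : Ideal R) [P.IsPrime]
  (K : Type*) [CommRing K] [Algebra R K] [IsFractionRing R K]

/-- Not an instance: for `K = FractionRing R` it would form a diamond with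
`OreLocalization.instAlgebra`. -/
noncomputable abbrev Localization.AtPrime.algebraOfIsFractionRing :
    Algebra (Localization.AtPrime P) K :=
  IsLocalization.localizationAlgebraOfSubmonoidLe _ K P.primeCompl (nonZeroDivisors R)
    P.primeCompl_le_nonZeroDivisors

attribute [local instance] Localization.AtPrime.algebraOfIsFractionRing

theorem Localization.AtPrime.isFractionRing_of_isFractionRing :
    IsFractionRing (Localization.AtPrime P) K :=
  have := IsLocalization.localization_isScalarTower_of_submonoid_le (Localization.AtPrime P) K
    P.primeCompl (nonZeroDivisors R) P.primeCompl_le_nonZeroDivisors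
  IsFractionRing.isFractionRing_of_isDomain_of_isLocalization P.primeCompl _ K

end FractionRing

theorem IsFractionRing.isLocalization_atPrime_bot {R K : Type*} [CommRing R] [IsDomain R]
    [CommRing K] [Algebra R K] [IsFractionRing R K] :
    IsLocalization.AtPrime K (⊥ : Ideal R) := by
  rw [IsLocalization.AtPrime, Ideal.primeCompl_bot]
  infer_instance

theorem AlgebraicGeometry.Scheme.exists_stalk_ringEquiv_fractionRing (X : Scheme) (x : X)
    [IsDomain (X.presheaf.stalk x)] :
    ∃ y : X, Nonempty (X.presheaf.stalk y ≃+* FractionRing (X.presheaf.stalk x)) := by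
  obtain ⟨U, hU, hxU, -⟩ :=
    exists_isAffineOpen_mem_and_subset (TopologicalSpace.Opens.mem_top x)
  let := X.presheaf.algebra_section_stalk ⟨x, hxU⟩
  have := hU.isLocalization_stalk ⟨x, hxU⟩
  have : IsLocalization.AtPrime (FractionRing (X.presheaf.stalk x))
      (⊥ : Ideal (X.presheaf.stalk x)) :=
    IsFractionRing.isLocalization_atPrime_bot
  let q : PrimeSpectrum Γ(X, U) :=
    ⟨_, (Ideal.isPrime_bot (α := X.presheaf.stalk x)).comap (algebraMap Γ(X, U) _)⟩
  have hq : IsLocalization.AtPrime (FractionRing (X.presheaf.stalk x)) q.asIdeal :=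
    IsLocalization.isLocalization_isLocalization_atPrime_isLocalization
      (hU.primeIdealOf ⟨x, hxU⟩).asIdeal.primeCompl _ _
  have hqU : hU.fromSpec q ∈ U := hU.range_fromSpec.subset (Set.mem_range_self q)
  let := X.presheaf.algebra_section_stalk ⟨_, hqU⟩
  have hy := hU.isLocalization_stalk' q hqU
  exact ⟨hU.fromSpec q,
    ⟨(@IsLocalization.algEquiv _ _ q.asIdeal.primeCompl _ _ _ hy _ _ _ hq).toRingEquiv⟩⟩

attribute [local instance] Localization.AtPrime.algebraOfIsFractionRing in
theorem exists_stalk_rat_of_exists_stalk_zloc_general (S : Scheme)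
    (h : ∃ (x : S) (p : ℕ) (hp : p.Prime),
      Nonempty ((S.presheaf.stalk x : CommRingCat) ≃+* ZLocAtPrime p hp)) :
    ∃ y : S, Nonempty ((S.presheaf.stalk y : CommRingCat) ≃+* ℚ) := by
  obtain ⟨x, p, hp, ⟨e⟩⟩ := h
  have := spanIntPrime p hp
  have : IsDomain (S.presheaf.stalk x) := e.toMulEquiv.isDomain
  have : IsFractionRing (ZLocAtPrime p hp) ℚ :=
    Localization.AtPrime.isFractionRing_of_isFractionRing _ ℚ
  obtain ⟨y, ⟨f⟩⟩ := S.exists_stalk_ringEquiv_fractionRing x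
  exact ⟨y, ⟨f.trans (IsFractionRing.ringEquivOfRingEquiv e)⟩⟩

/-- Let `S` be a subterminal scheme.  If some point of `S` has stalk isomorphic to `ℤ_(p)`
for some prime `p`, then some point of `S` has stalk isomorphic to `ℚ`. -/
theorem exists_stalk_rat_of_exists_stalk_zloc (S : Scheme) (hS : IsSubterminal S)
    (h : ∃ (x : S) (p : ℕ) (hp : p.Prime),
      Nonempty ((S.presheaf.stalk x : CommRingCat) ≃+* ZLocAtPrime p hp)) :
    ∃ y : S, Nonempty ((S.presheaf.stalk y : CommRingCat) ≃+* ℚ) :=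
  exists_stalk_rat_of_exists_stalk_zloc_general S h
end

section
/- Let S be a scheme such that: (i) every stalk of S is isomorphic, as a commutative ring, to ℚ, to ℤ_(p) for some prime p, or to ℤ/pⁿℤ for some prime p and positive integer n; (ii) there is at most one point of S whose stalk is isomorphic to ℚ; and (iii) for every prime p there is at most one point of S whose stalk is isomorphic to ℤ_(p) or to ℤ/pⁿℤ for some positive integer n. Then S is a subterminal object in the category of schemes. -/
open AlgebraicGeometry CategoryTheory

/-!
The stalk types are told apart by which integers they invert: the nonzero ones for `ℚ`, those
prime to `p` for `ℤ_(p)` and `ℤ/pⁿℤ`. Stalk maps are local homomorphisms, so for any morphism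
`f : S ⟶ Y` the stalks of `S` at `x` and of `Y` at `f x` invert the same integers; by (ii) and
(iii), `f` is therefore injective on points. Every element of such a stalk is a fraction `a / b`
of integers with `b` invertible, so `f` is also surjective on stalks, hence a monomorphism; for
`f = S ⟶ ⊤_ Scheme` this is subterminality.
-/

open Limits

def intUnits (R : Type*) [CommRing R] : Set ℤ := {n | IsUnit (n : R)}

theorem intUnits_eq_of_isLocalHom {R R' F : Type*} [CommRing R] [CommRing R'] [FunLike F R R']
    [RingHomClass F R R'] (φ : F) [IsLocalHom φ] : intUnits R = intUnits R' := by
  ext n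
  simp only [intUnits, Set.mem_ofPred_eq, ← map_intCast φ, isUnit_map_iff]

theorem intUnits_rat : intUnits ℚ = {n | n ≠ 0} := by
  ext n
  simp [intUnits]

theorem intUnits_zLocAtPrime (p : ℕ) (hp : p.Prime) :
    intUnits (ZLocAtPrime p hp) = {n | ¬ (p : ℤ) ∣ n} := by
  ext n
  have := spanIntPrime p hp
  have := IsLocalization.AtPrime.isUnit_to_map_iff (ZLocAtPrime p hp) (Ideal.span {(p : ℤ)}) n
  simpa [intUnits, Ideal.mem_span_singleton] using this

theorem intUnits_zmod_pow (p : ℕ) (hp : p.Prime) {k : ℕ} (hk : 0 < k) :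
    intUnits (ZMod (p ^ k)) = {n | ¬ (p : ℤ) ∣ n} := by
  ext n
  simp only [intUnits, Set.mem_ofPred_eq, ZMod.coe_int_isUnit_iff_isCoprime, Nat.cast_pow,
    IsCoprime.pow_left_iff hk, (Nat.prime_iff_prime_int.mp hp).coprime_iff_not_dvd]

def IsZLocOrZModPow (p : ℕ) (hp : p.Prime) (R : Type*) [CommRing R] : Prop :=
  Nonempty (R ≃+* ZLocAtPrime p hp) ∨ ∃ n : ℕ, 0 < n ∧ Nonempty (R ≃+* ZMod (p ^ n))

theorem IsZLocOrZModPow.intUnits_eq {p : ℕ} {hp : p.Prime} {R : Type*} [CommRing R]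
    (h : IsZLocOrZModPow p hp R) : intUnits R = {n | ¬ (p : ℤ) ∣ n} := by
  rcases h with ⟨⟨e⟩⟩ | ⟨k, hk, ⟨e⟩⟩
  · rw [intUnits_eq_of_isLocalHom e, intUnits_zLocAtPrime]
  · rw [intUnits_eq_of_isLocalHom e, intUnits_zmod_pow p hp hk]

theorem setOf_ne_zero_ne_setOf_not_dvd {p : ℕ} (hp : p.Prime) :
    {n : ℤ | n ≠ 0} ≠ {n | ¬ (p : ℤ) ∣ n} := by
  intro h
  have : (p : ℤ) ∈ {n : ℤ | n ≠ 0} := by simpa using hp.ne_zero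
  rw [h] at this
  exact this dvd_rfl

theorem eq_of_setOf_not_dvd_eq {p q : ℕ} (hp : p.Prime) (hq : q.Prime)
    (h : {n : ℤ | ¬ (p : ℤ) ∣ n} = {n | ¬ (q : ℤ) ∣ n}) : p = q := by
  by_contra hpq
  have : (q : ℤ) ∈ {n : ℤ | ¬ (p : ℤ) ∣ n} := by
    simpa [Int.natCast_dvd_natCast, Nat.prime_dvd_prime_iff_eq hp hq] using hpq
  rw [h] at this
  exact this dvd_rfl

theorem sameKind_of_intUnits_eq {R R' : Type*} [CommRing R] [CommRing R']
    (hR : Nonempty (R ≃+* ℚ) ∨ ∃ p hp, IsZLocOrZModPow p hp R)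
    (hR' : Nonempty (R' ≃+* ℚ) ∨ ∃ p hp, IsZLocOrZModPow p hp R')
    (h : intUnits R = intUnits R') :
    (Nonempty (R ≃+* ℚ) ∧ Nonempty (R' ≃+* ℚ)) ∨
      ∃ p hp, IsZLocOrZModPow p hp R ∧ IsZLocOrZModPow p hp R' := by
  rcases hR with ⟨⟨e⟩⟩ | ⟨p, hp, hpR⟩ <;> rcases hR' with ⟨⟨e'⟩⟩ | ⟨q, hq, hqR'⟩
  · exact .inl ⟨⟨e⟩, ⟨e'⟩⟩
  · rw [intUnits_eq_of_isLocalHom e, intUnits_rat, hqR'.intUnits_eq] at h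
    exact absurd h (setOf_ne_zero_ne_setOf_not_dvd hq)
  · rw [intUnits_eq_of_isLocalHom e', intUnits_rat, hpR.intUnits_eq] at h
    exact absurd h.symm (setOf_ne_zero_ne_setOf_not_dvd hp)
  · rw [hpR.intUnits_eq, hqR'.intUnits_eq] at h
    obtain rfl := eq_of_setOf_not_dvd_eq hp hq h
    exact .inr ⟨p, hp, hpR, hqR'⟩

def HasIntFractions (R : Type*) [CommRing R] : Prop :=
  ∀ r : R, ∃ a b : ℤ, IsUnit (b : R) ∧ r * b = a

theorem HasIntFractions.of_ringEquiv {R R' : Type*} [CommRing R] [CommRing R'] (e : R ≃+* R')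
    (h : HasIntFractions R') : HasIntFractions R := by
  intro r
  obtain ⟨a, b, hb, hr⟩ := h (e r)
  refine ⟨a, b, by simpa using hb.map e.symm, e.injective ?_⟩
  simpa using hr

theorem hasIntFractions_of_isLocalization (M : Submonoid ℤ) (R : Type*) [CommRing R]
    [Algebra ℤ R] [IsLocalization M R] : HasIntFractions R := by
  intro r
  obtain ⟨⟨a, b⟩, h⟩ := IsLocalization.surj M r
  exact ⟨a, b, by simpa using IsLocalization.map_units R b, by simpa using h⟩

theorem hasIntFractions_zmod (m : ℕ) : HasIntFractions (ZMod m) := fun r ↦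
  ⟨r.cast, 1, by simp, by simp⟩

theorem RingHom.surjective_of_hasIntFractions {R R' : Type*} [CommRing R] [CommRing R']
    (φ : R →+* R') [IsLocalHom φ] (h : HasIntFractions R') : Function.Surjective φ := by
  intro r
  obtain ⟨a, b, hb, hr⟩ := h r
  obtain ⟨u, hu⟩ : IsUnit (b : R) := by rwa [← isUnit_map_iff φ, map_intCast]
  refine ⟨a * ↑u⁻¹, ?_⟩
  rw [map_mul, map_intCast, ← hr, mul_assoc, ← map_intCast φ, ← hu, ← map_mul, u.mul_inv,
    map_one, mul_one]

/-- Let `S` be a scheme such that: (i) every stalk of `S` is isomorphic to `ℚ`, to `ℤ_(p)`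
for some prime `p`, or to `ℤ/pⁿℤ` for some prime `p` and positive integer `n`; (ii) at most
one point of `S` has stalk isomorphic to `ℚ`; (iii) for every prime `p`, at most one point
of `S` has stalk isomorphic to `ℤ_(p)` or to `ℤ/pⁿℤ` for some positive `n`.  Then `S` is a
subterminal object in the category of schemes. -/
theorem isSubterminal_of_stalk_conditions (S : Scheme)
    (h1 : ∀ x : S,
      Nonempty ((S.presheaf.stalk x : CommRingCat) ≃+* ℚ) ∨
      (∃ (p : ℕ) (hp : p.Prime),
        Nonempty ((S.presheaf.stalk x : CommRingCat) ≃+* ZLocAtPrime p hp)) ∨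
      (∃ (p n : ℕ), p.Prime ∧ 0 < n ∧
        Nonempty ((S.presheaf.stalk x : CommRingCat) ≃+* ZMod (p ^ n))))
    (h2 : ∀ x y : S,
      Nonempty ((S.presheaf.stalk x : CommRingCat) ≃+* ℚ) →
      Nonempty ((S.presheaf.stalk y : CommRingCat) ≃+* ℚ) → x = y)
    (h3 : ∀ (p : ℕ) (hp : p.Prime) (x y : S),
      (Nonempty ((S.presheaf.stalk x : CommRingCat) ≃+* ZLocAtPrime p hp) ∨
        ∃ n : ℕ, 0 < n ∧ Nonempty ((S.presheaf.stalk x : CommRingCat) ≃+* ZMod (p ^ n))) →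
      (Nonempty ((S.presheaf.stalk y : CommRingCat) ≃+* ZLocAtPrime p hp) ∨
        ∃ n : ℕ, 0 < n ∧ Nonempty ((S.presheaf.stalk y : CommRingCat) ≃+* ZMod (p ^ n))) →
      x = y) :
    IsSubterminal S := by
  have hkind (x : S) : Nonempty (S.presheaf.stalk x ≃+* ℚ) ∨
      ∃ p hp, IsZLocOrZModPow p hp (S.presheaf.stalk x) := by
    rcases h1 x with h | ⟨p, hp, h⟩ | ⟨p, n, hp, hn, h⟩
    exacts [.inl h, .inr ⟨p, hp, .inl h⟩, .inr ⟨p, hp, .inr ⟨n, hn, h⟩⟩]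
  have hfrac (x : S) : HasIntFractions (S.presheaf.stalk x) := by
    rcases h1 x with ⟨⟨e⟩⟩ | ⟨p, hp, ⟨e⟩⟩ | ⟨p, n, -, -, ⟨e⟩⟩
    · exact (hasIntFractions_of_isLocalization (nonZeroDivisors ℤ) ℚ).of_ringEquiv e
    · have := spanIntPrime p hp
      exact (hasIntFractions_of_isLocalization (Ideal.span {(p : ℤ)}).primeCompl
        (ZLocAtPrime p hp)).of_ringEquiv e
    · exact (hasIntFractions_zmod _).of_ringEquiv e
  let f := terminal.from S
  have hinj : Function.Injective f.base := fun x y hxy ↦ by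
    have h : intUnits (S.presheaf.stalk x) = intUnits (S.presheaf.stalk y) := by
      rw [← intUnits_eq_of_isLocalHom (f.stalkMap x).hom,
        ← intUnits_eq_of_isLocalHom (f.stalkMap y).hom, hxy]
    rcases sameKind_of_intUnits_eq (hkind x) (hkind y) h with ⟨hx, hy⟩ | ⟨p, hp, hx, hy⟩
    exacts [h2 x y hx hy, h3 p hp x y hx hy]
  have : SurjectiveOnStalks f :=
    ⟨fun x ↦ (f.stalkMap x).hom.surjective_of_hasIntFractions (hfrac x)⟩
  have : Mono f := SurjectiveOnStalks.mono_of_injective hinj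
  exact isSubterminal_of_mono_terminal_from
end

section
/- Let S be a subterminal scheme, and let U and V be affine open subsets of S each of which contains a point whose stalk is isomorphic, as a commutative ring, to ℚ. Then the symmetric difference (U \ V) ∪ (V \ U) of the underlying point sets of U and V is finite. -/
/-!
In a subterminal scheme two points whose residue fields embed into a common field coincide, because
the two induced morphisms from the spectrum of that field must agree. Since fields of equal
characteristic embed into a common field, a point is determined by its residue characteristic; in
particular both given points are the unique point `x` of characteristic zero.

Choose `f` on the affine `U` with `x ∈ D(f) ⊆ U ∩ V`. Some nonzero integer `N` lies in `(f)`: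
otherwise a prime of `Γ(U)` containing `f` and no nonzero integer would be a second point of
characteristic zero. So every point of `U \ D(f)` has residue characteristic dividing `N`, and
there are only finitely many such points.
-/

open AlgebraicGeometry CategoryTheory

universe u

lemma exists_common_field_extension_of_algebra (F : Type*) (K L : Type u) [Field F] [Field K]
    [Field L] [Algebra F K] [Algebra F L] :
    ∃ (M : Type u) (_ : Field M), Nonempty ((K →+* M) × (L →+* M)) := by
  obtain ⟨m, _⟩ := Ideal.exists_maximal (TensorProduct F K L)
  exact ⟨_, Ideal.Quotient.field m,
    ⟨⟨(Ideal.Quotient.mk m).comp Algebra.TensorProduct.includeLeftRingHom,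
      (Ideal.Quotient.mk m).comp Algebra.TensorProduct.includeRight.toRingHom⟩⟩⟩

lemma exists_common_field_extension_of_ringChar_eq (K L : Type u) [Field K] [Field L]
    (h : ringChar K = ringChar L) :
    ∃ (M : Type u) (_ : Field M), Nonempty ((K →+* M) × (L →+* M)) := by
  rcases CharP.char_is_prime_or_zero K (ringChar K) with hp | h0
  · have : Fact (ringChar K).Prime := ⟨hp⟩
    have : CharP L (ringChar K) := h ▸ ringChar.charP L
    let := ZMod.algebra K (ringChar K)
    let := ZMod.algebra L (ringChar K)
    exact exists_common_field_extension_of_algebra (ZMod (ringChar K)) K L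
  · have : CharZero K := (CharP.ringChar_zero_iff_CharZero _).1 h0
    have : CharZero L := (CharP.ringChar_zero_iff_CharZero _).1 (h ▸ h0)
    exact exists_common_field_extension_of_algebra ℚ K L

lemma Ideal.exists_le_prime_forall_natCast_notMem {A : Type*} [CommRing A] (I : Ideal A)
    (hI : ∀ n : ℕ, n ≠ 0 → (n : A) ∉ I) :
    ∃ p : Ideal A, p.IsPrime ∧ I ≤ p ∧ ∀ n : ℕ, n ≠ 0 → (n : A) ∉ p := by
  obtain ⟨p, hp, hIp, hdisj⟩ := I.exists_le_prime_disjoint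
    ((nonZeroDivisors ℕ).map (Nat.castRingHom A)) <| Set.disjoint_right.2 <| by
      rintro _ ⟨n, hn, rfl⟩
      exact hI n (nonZeroDivisors.ne_zero hn)
  exact ⟨p, hp, hIp, fun n hn hnp =>
    Set.disjoint_left.1 hdisj hnp ⟨n, mem_nonZeroDivisors_of_ne_zero hn, rfl⟩⟩

namespace AlgebraicGeometry

variable {S : Scheme.{u}}

lemma Scheme.ringChar_residueField_eq_zero_of_ringHom_rat {x : S}
    (φ : ℚ →+* S.presheaf.stalk x) : ringChar (S.residueField x) = 0 :=
  have := charZero_of_injective_ringHom ((S.residue x).hom.comp φ).injective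
  ringChar.eq_zero

lemma IsAffineOpen.fromSpec_mem {U : S.Opens} (hU : IsAffineOpen U) (p : Spec Γ(S, U)) :
    hU.fromSpec p ∈ U :=
  hU.range_fromSpec.subset (Set.mem_range_self p)

lemma IsAffineOpen.evaluation_fromSpec_eq_zero_iff {U : S.Opens} (hU : IsAffineOpen U)
    (p : Spec Γ(S, U)) (a : Γ(S, U)) :
    S.evaluation U (hU.fromSpec p) (hU.fromSpec_mem p) a = 0 ↔ a ∈ p.asIdeal := by
  rw [Scheme.evaluation_eq_zero_iff_notMem_basicOpen, ← Scheme.Hom.mem_preimage,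
    hU.fromSpec_preimage_basicOpen]
  exact (iff_not_comm.1 (PrimeSpectrum.mem_basicOpen a p)).symm

lemma IsAffineOpen.exists_ringChar_residueField_eq_zero {U : S.Opens} (hU : IsAffineOpen U)
    {I : Ideal Γ(S, U)} (hI : ∀ n : ℕ, n ≠ 0 → (n : Γ(S, U)) ∉ I) :
    ∃ y, ∃ hy : y ∈ U, ringChar (S.residueField y) = 0 ∧ ∀ a ∈ I, S.evaluation U y hy a = 0 := by
  obtain ⟨p, hp, hIp, hpn⟩ := I.exists_le_prime_forall_natCast_notMem hI
  refine ⟨hU.fromSpec ⟨p, hp⟩, hU.fromSpec_mem _, ?_, fun a ha =>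
    (hU.evaluation_fromSpec_eq_zero_iff _ a).2 (hIp ha)⟩
  have : CharZero (S.residueField (hU.fromSpec ⟨p, hp⟩)) := charZero_of_inj_zero fun n hn =>
    not_ne_iff.1 fun h => hpn n h <| (hU.evaluation_fromSpec_eq_zero_iff ⟨p, hp⟩ _).1 <| by
      rwa [map_natCast]
  exact ringChar.eq_zero

end AlgebraicGeometry

namespace CategoryTheory.IsSubterminal

variable {S : Scheme.{u}}

lemma eq_of_ringHom_residueField (hS : IsSubterminal S) {s t : S} {M : Type u} [Field M]
    (f : S.residueField s →+* M) (g : S.residueField t →+* M) : s = t := by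
  have h := hS (Spec.map (CommRingCat.ofHom f) ≫ S.fromSpecResidueField s)
    (Spec.map (CommRingCat.ofHom g) ≫ S.fromSpecResidueField t)
  exact (S.fromSpecResidueField_apply s _).symm.trans <|
    congr($h (IsLocalRing.closedPoint M)).trans (S.fromSpecResidueField_apply t _)

lemma injective_ringChar_residueField (hS : IsSubterminal S) :
    Function.Injective fun s : S => ringChar (S.residueField s) := fun _ _ h =>
  have ⟨_, _, ⟨f, g⟩⟩ := exists_common_field_extension_of_ringChar_eq _ _ h
  hS.eq_of_ringHom_residueField f g

lemma exists_natCast_mem_span_singleton (hS : IsSubterminal S) {U : S.Opens}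
    (hU : IsAffineOpen U) {f : Γ(S, U)} {x : S} (hx : x ∈ S.basicOpen f)
    (hx0 : ringChar (S.residueField x) = 0) :
    ∃ N : ℕ, N ≠ 0 ∧ (N : Γ(S, U)) ∈ Ideal.span {f} := by
  by_contra! h
  obtain ⟨y, hyU, hy0, hyf⟩ := hU.exists_ringChar_residueField_eq_zero h
  obtain rfl : y = x := hS.injective_ringChar_residueField (hy0.trans hx0.symm)
  exact (S.evaluation_eq_zero_iff_notMem_basicOpen y hyU f).1
    (hyf f (Ideal.mem_span_singleton_self f)) hx

lemma finite_diff_basicOpen (hS : IsSubterminal S) {U : S.Opens} {f : Γ(S, U)} {N : ℕ}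
    (hN : N ≠ 0) (hNf : (N : Γ(S, U)) ∈ Ideal.span {f}) :
    ((U : Set S) \ S.basicOpen f).Finite := by
  refine .of_finite_image ((Set.finite_Iic N).subset ?_) hS.injective_ringChar_residueField.injOn
  rintro _ ⟨s, ⟨hsU, hsf⟩, rfl⟩
  obtain ⟨a, ha⟩ := Ideal.mem_span_singleton'.1 hNf
  have hN0 : (N : S.residueField s) = 0 := by
    rw [← map_natCast (S.evaluation U s hsU).hom, ← ha, map_mul,
      (S.evaluation_eq_zero_iff_notMem_basicOpen s hsU f).2 hsf, mul_zero]
  exact Nat.le_of_dvd (Nat.pos_of_ne_zero hN) (ringChar.dvd hN0)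

lemma finite_diff_of_ringChar_eq_zero (hS : IsSubterminal S) {U W : S.Opens}
    (hU : IsAffineOpen U) {x : S} (hxU : x ∈ U) (hxW : x ∈ W)
    (hx0 : ringChar (S.residueField x) = 0) : ((U : Set S) \ W).Finite := by
  obtain ⟨f, hfW, hxf⟩ := hU.exists_basicOpen_le (V := U ⊓ W) ⟨x, hxU, hxW⟩ hxU
  obtain ⟨N, hN, hNf⟩ := hS.exists_natCast_mem_span_singleton hU hxf hx0
  exact (hS.finite_diff_basicOpen hN hNf).subset
    (Set.sdiff_subset_sdiff_right fun _ hy => (hfW hy).2)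

end CategoryTheory.IsSubterminal

/-- Let `S` be a subterminal scheme, and let `U` and `V` be affine open subsets of `S`, each
containing a point whose stalk is isomorphic to `ℚ`.  Then the symmetric difference of the
underlying point sets of `U` and `V` is finite. -/
theorem symmDiff_finite_of_affine_opens (S : Scheme) (hS : IsSubterminal S)
    (U V : S.Opens) (hU : IsAffineOpen U) (hV : IsAffineOpen V)
    (hUQ : ∃ x ∈ U, Nonempty ((S.presheaf.stalk x : CommRingCat) ≃+* ℚ))
    (hVQ : ∃ x ∈ V, Nonempty ((S.presheaf.stalk x : CommRingCat) ≃+* ℚ)) :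
    Set.Finite (((U : Set S) \ (V : Set S)) ∪ ((V : Set S) \ (U : Set S))) := by
  obtain ⟨x, hxU, ⟨eU⟩⟩ := hUQ
  obtain ⟨y, hyV, ⟨eV⟩⟩ := hVQ
  have hx0 := Scheme.ringChar_residueField_eq_zero_of_ringHom_rat eU.symm.toRingHom
  have hy0 := Scheme.ringChar_residueField_eq_zero_of_ringHom_rat eV.symm.toRingHom
  obtain rfl : x = y := hS.injective_ringChar_residueField (hx0.trans hy0.symm)
  exact (hS.finite_diff_of_ringChar_eq_zero hU hxU hyV hx0).union
    (hS.finite_diff_of_ringChar_eq_zero hV hyV hxU hx0)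
end
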